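/- Let (k_n)_n and (l_n)_n be sequences of natural numbers with lim_n k_n = lim_n l_n = ∞, and let f be an almost permutation of ℕ with lim_n k_{f(n)}/l_n = 1. Then there is a well-defined group isomorphism ψ_f : Sym[(k_n)_n] → Sym[(l_n)_n] such that for every (a_n)_n ∈ ∏_n Sym(k_n), ψ_f([(a_n)_n]) = [(b_n)_n], where b_n = a_{f(n)} ↕ Sym(l_n) for every n in a cofinite set on which f is injective, and b_n = 1 otherwise (the resulting class does not depend on these choices or on the representative (a_n)_n). -/

import Mathlib

open Filter Equiv Set

namespace SymPaper

/-- The normalized Hamming distance on permutations of `Fin N`: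
`d_N(σ,τ) = |{i : σ i ≠ τ i}| / N`. -/
noncomputable def hd {N : ℕ} (σ τ : Equiv.Perm (Fin N)) : ℝ :=
  ((Finset.univ.filter fun i => σ i ≠ τ i).card : ℝ) / N

lemma hd_nonneg {N : ℕ} (σ τ : Equiv.Perm (Fin N)) : 0 ≤ hd σ τ :=
  div_nonneg (Nat.cast_nonneg _) (Nat.cast_nonneg _)

lemma hd_self {N : ℕ} (σ : Equiv.Perm (Fin N)) : hd σ σ = 0 := by
  simp [hd]

lemma hd_filter_eq_support {N : ℕ} (σ τ : Equiv.Perm (Fin N)) :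
    (Finset.univ.filter fun i => σ i ≠ τ i) = (σ⁻¹ * τ).support := by
  ext i
  simp only [Finset.mem_filter, Finset.mem_univ, true_and, Equiv.Perm.mem_support,
    Equiv.Perm.mul_apply, ne_eq, Equiv.Perm.inv_eq_iff_eq]
  exact not_congr ⟨fun h => h.symm, fun h => h.symm⟩

lemma hd_one {N : ℕ} (σ : Equiv.Perm (Fin N)) :
    hd σ 1 = (σ.support.card : ℝ) / N := by
  unfold hd
  rw [hd_filter_eq_support, mul_one, Equiv.Perm.support_inv]

lemma hd_mul_one_le {N : ℕ} (σ τ : Equiv.Perm (Fin N)) :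
    hd (σ * τ) 1 ≤ hd σ 1 + hd τ 1 := by
  rcases Nat.eq_zero_or_pos N with h0 | hpos
  · subst h0; simp [hd]
  · have hN : (0 : ℝ) < N := by exact_mod_cast hpos
    rw [hd_one, hd_one, hd_one, ← add_div]
    rw [div_le_div_iff_of_pos_right hN]
    have h1 : ((σ * τ).support).card ≤ (σ.support ⊔ τ.support).card :=
      Finset.card_le_card (Equiv.Perm.support_mul_le σ τ)
    have h2 : (σ.support ⊔ τ.support).card ≤ σ.support.card + τ.support.card :=
      Finset.card_union_le _ _
    exact_mod_cast le_trans h1 h2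

lemma hd_inv_one {N : ℕ} (σ : Equiv.Perm (Fin N)) : hd σ⁻¹ 1 = hd σ 1 := by
  rw [hd_one, hd_one, Equiv.Perm.support_inv]

lemma hd_conj_one {N : ℕ} (g σ : Equiv.Perm (Fin N)) :
    hd (g * σ * g⁻¹) 1 = hd σ 1 := by
  rw [hd_one, hd_one, Equiv.Perm.support_conj, Finset.card_map]

/-- The normal subgroup of elements of `∏ n, Sym(k n)` that tend to the identity
along the filter `F`. -/
def symNull (k : ℕ → ℕ) (F : Filter ℕ) : Subgroup (∀ n, Equiv.Perm (Fin (k n))) where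
  carrier := {a | Filter.Tendsto (fun n => hd (a n) 1) F (nhds 0)}
  one_mem' := by
    simpa [hd_self] using (tendsto_const_nhds : Filter.Tendsto (fun _ : ℕ => (0:ℝ)) F (nhds 0))
  mul_mem' := by
    intro a b ha hb
    refine squeeze_zero (fun n => hd_nonneg _ _) (fun n => ?_) (by simpa using ha.add hb)
    exact hd_mul_one_le (a n) (b n)
  inv_mem' := by
    intro a ha
    simpa [hd_inv_one] using ha

instance symNull_normal (k : ℕ → ℕ) (F : Filter ℕ) : (symNull k F).Normal := by
  constructor
  intro a ha g
  show Filter.Tendsto (fun n => hd ((g * a * g⁻¹) n) 1) F (nhds 0)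
  have ha' : Filter.Tendsto (fun n => hd (a n) 1) F (nhds 0) := ha
  simpa [hd_conj_one] using ha'

/-- The metric reduced product `Sym[(k n)ₙ]`. -/
abbrev SymRP (k : ℕ → ℕ) : Type :=
  (∀ n, Equiv.Perm (Fin (k n))) ⧸ symNull k Filter.atTop

/-- The metric ultraproduct `∏ₙ Sym(k n) / U`. -/
abbrev SymUP (k : ℕ → ℕ) (U : Ultrafilter ℕ) : Type :=
  (∀ n, Equiv.Perm (Fin (k n))) ⧸ symNull k (U : Filter ℕ)

/-- Class of a sequence in the metric reduced product. -/
def mkRP {k : ℕ → ℕ} (a : ∀ n, Equiv.Perm (Fin (k n))) : SymRP k :=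
  QuotientGroup.mk a

/-- Class of a sequence in the metric ultraproduct. -/
def mkUP {k : ℕ → ℕ} (U : Ultrafilter ℕ) (a : ∀ n, Equiv.Perm (Fin (k n))) : SymUP k U :=
  QuotientGroup.mk a

section CutLift

lemma cut_exists {n : ℕ} (σ : Equiv.Perm (Fin n)) {m : ℕ} (h : m ≤ n) (i : Fin m) :
    ∃ kk : ℕ, 1 ≤ kk ∧ (((σ ^ kk) (Fin.castLE h i) : Fin n) : ℕ) < m := by
  refine ⟨orderOf σ, orderOf_pos σ, ?_⟩
  rw [pow_orderOf_eq_one]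
  simpa using i.2

/-- The underlying function of the cutting `σ ↓ Sym(m)`: it sends `i < m` to
`σ^k i` for the least `k ≥ 1` with `σ^k i < m`. -/
noncomputable def cutFun {n : ℕ} (σ : Equiv.Perm (Fin n)) {m : ℕ} (h : m ≤ n) (i : Fin m) :
    Fin m :=
  ⟨(((σ ^ (Nat.find (cut_exists σ h i))) (Fin.castLE h i) : Fin n) : ℕ),
    (Nat.find_spec (cut_exists σ h i)).2⟩

lemma cutFun_injective {n : ℕ} (σ : Equiv.Perm (Fin n)) {m : ℕ} (h : m ≤ n) :
    Function.Injective (cutFun σ h) := by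
  have key : ∀ i j : Fin m,
      Nat.find (cut_exists σ h i) ≤ Nat.find (cut_exists σ h j) →
      cutFun σ h i = cutFun σ h j → i = j := by
    intro i j hle hij
    set ki := Nat.find (cut_exists σ h i) with hki
    set kj := Nat.find (cut_exists σ h j) with hkj
    have hv : ((cutFun σ h i : Fin m) : ℕ) = ((cutFun σ h j : Fin m) : ℕ) :=
      congrArg Fin.val hij
    have hval : (σ ^ ki) (Fin.castLE h i) = (σ ^ kj) (Fin.castLE h j) := Fin.ext hv
    have hki1 : 1 ≤ ki := (Nat.find_spec (cut_exists σ h i)).1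
    have hkj1 : 1 ≤ kj := (Nat.find_spec (cut_exists σ h j)).1
    have hpow : σ ^ ki * σ ^ (kj - ki) = σ ^ kj := by
      rw [← pow_add, Nat.add_sub_cancel' hle]
    have h2 : (σ ^ (kj - ki)) (Fin.castLE h j) = Fin.castLE h i := by
      apply (σ ^ ki).injective
      calc (σ ^ ki) ((σ ^ (kj - ki)) (Fin.castLE h j))
          = (σ ^ ki * σ ^ (kj - ki)) (Fin.castLE h j) := rfl
        _ = (σ ^ kj) (Fin.castLE h j) := by rw [hpow]
        _ = (σ ^ ki) (Fin.castLE h i) := hval.symm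
    by_cases hzero : kj - ki = 0
    · have hkeq : ki = kj := le_antisymm hle (Nat.sub_eq_zero_iff_le.mp hzero)
      have : Fin.castLE h i = Fin.castLE h j := by
        apply (σ ^ kj).injective
        rw [← hval, hkeq]
      exact Fin.castLE_injective h this
    · exfalso
      have hlt : kj - ki < kj := Nat.sub_lt (lt_of_lt_of_le Nat.one_pos hkj1) hki1
      have := Nat.find_min (cut_exists σ h j) hlt
      apply this
      refine ⟨Nat.one_le_iff_ne_zero.mpr hzero, ?_⟩
      rw [h2]
      simpa using i.2
  intro i j hij
  rcases le_total (Nat.find (cut_exists σ h i)) (Nat.find (cut_exists σ h j)) with hle | hle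
  · exact key i j hle hij
  · exact (key j i hle hij.symm).symm

/-- Cutting `σ ↓ Sym(m)` of a permutation `σ ∈ Sym(n)` for `m ≤ n`. -/
noncomputable def cutPerm {n : ℕ} (σ : Equiv.Perm (Fin n)) {m : ℕ} (h : m ≤ n) :
    Equiv.Perm (Fin m) :=
  Equiv.ofBijective (cutFun σ h) (Finite.injective_iff_bijective.mp (cutFun_injective σ h))

/-- Lifting `τ ↑ Sym(n)` of a permutation `τ ∈ Sym(m)` for `m ≤ n`: it acts as `τ` on
`{0,…,m-1}` and fixes the remaining points. -/
noncomputable def liftPerm {m : ℕ} (τ : Equiv.Perm (Fin m)) {n : ℕ} (h : m ≤ n) :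
    Equiv.Perm (Fin n) :=
  τ.viaFintypeEmbedding (Fin.castLEEmb h)

/-- `σ ↕ Sym(n)`: lifting if `m ≤ n`, cutting if `n ≤ m`. -/
noncomputable def updown {m : ℕ} (σ : Equiv.Perm (Fin m)) (n : ℕ) : Equiv.Perm (Fin n) :=
  if h : m ≤ n then liftPerm σ h else cutPerm σ (le_of_lt (not_le.mp h))

end CutLift

/-- An almost permutation of `ℕ`: a map with cofinite range which is injective on a
cofinite set. -/
def AlmostPerm (f : ℕ → ℕ) : Prop :=
  (Set.range f)ᶜ.Finite ∧ ∃ S : Set ℕ, Sᶜ.Finite ∧ Set.InjOn f S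

/-- `limsup` of a real sequence along an infinite set of indices. -/
noncomputable def limsupOn (S : Set ℕ) (x : ℕ → ℝ) : ℝ :=
  Filter.limsup x (Filter.atTop ⊓ Filter.principal S)

/-- Almost equality: the sets where two sets of naturals differ is finite. -/
instance finSetoid : Setoid (Set ℕ) where
  r S T := (symmDiff S T).Finite
  iseqv := by
    refine ⟨fun S => by simp [symmDiff_self], fun h => by rwa [symmDiff_comm], ?_⟩
    intro S T V h1 h2
    exact (h1.union h2).subset (symmDiff_triangle S T V)

/-- The Boolean algebra `P(ℕ)/Fin`. -/
def PFin : Type := Quotient finSetoid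

/-- Class of a subset of `ℕ` in `P(ℕ)/Fin`. -/
def PFin.mk (S : Set ℕ) : PFin := Quotient.mk finSetoid S

/-- Join in `P(ℕ)/Fin`. -/
def PFin.sup : PFin → PFin → PFin :=
  Quotient.map₂ (· ∪ ·) (by
    intro S S' h1 T T' h2
    refine Set.Finite.subset (h1.union h2) ?_
    intro x hx
    simp only [Set.mem_symmDiff, Set.mem_union] at *
    tauto)

/-- Complement in `P(ℕ)/Fin`. -/
def PFin.compl : PFin → PFin :=
  Quotient.map (·ᶜ) (by
    intro S T h
    show (symmDiff Sᶜ Tᶜ).Finite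
    rwa [compl_symmDiff_compl])

/-- Todorčević's open coloring axiom `OCA`. -/
def OCA : Prop :=
  ∀ (X : Type) [MetricSpace X] [TopologicalSpace.SeparableSpace X],
    ∀ K : Set (X × X), IsOpen K → (∀ x y : X, (x, y) ∈ K → (y, x) ∈ K) →
      (∃ Y : Set X, ¬ Y.Countable ∧ ∀ x ∈ Y, ∀ y ∈ Y, x ≠ y → (x, y) ∈ K) ∨
      (∃ c : ℕ → Set X, (⋃ n, c n) = Set.univ ∧
        ∀ n, ∀ x ∈ c n, ∀ y ∈ c n, x ≠ y → (x, y) ∉ K)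

/-- Martin's axiom for σ-linked partial orders (for `ℵ₁` many dense sets). -/
def MAσlinked : Prop :=
  ∀ (P : Type) [PartialOrder P],
    (∃ Ps : ℕ → Set P, (⋃ n, Ps n) = Set.univ ∧
      ∀ n, ∀ p ∈ Ps n, ∀ q ∈ Ps n, ∃ r : P, r ≤ p ∧ r ≤ q) →
    ∀ (ι : Type) (D : ι → Set P), Cardinal.mk ι ≤ Cardinal.aleph 1 →
      (∀ i, ∀ p : P, ∃ q ∈ D i, q ≤ p) →
      ∃ G : Set P,
        (∀ p ∈ G, ∀ q ∈ G, ∃ r ∈ G, r ≤ p ∧ r ≤ q) ∧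
        (∀ p ∈ G, ∀ q : P, p ≤ q → q ∈ G) ∧
        ∀ i, (G ∩ D i).Nonempty

/-!
`ψ_f` is induced by the sequence map `a ↦ (a_{f n} ↕ Sym(l n))ₙ`. For `σ, τ ∈ Sym(M)`, passing to
`Sym(N)` by `↕` scales the Hamming distance by `M / N` and fails to be multiplicative, or to be
undone by `↕ Sym(M)`, only on a proportion `O(|M / N - 1|)` of the points: cutting agrees with `σ`
at every `i < N` with `σ i < N`. With `M = k (f n)`, `N = l n` these errors vanish in the limit,
so the sequence map descends to a homomorphism of the reduced products, and the map induced by an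
eventual inverse `g` of `f` is its inverse. The choice of the cofinite set `S` only affects finitely
many indices, which the reduced product does not see.
-/

open scoped Finset Topology

section Hamming

variable {N : ℕ}

lemma hd_comm (σ τ : Perm (Fin N)) : hd σ τ = hd τ σ := by
  simp only [hd, ne_comm]

lemma hd_triangle (σ τ υ : Perm (Fin N)) : hd σ υ ≤ hd σ τ + hd τ υ := by
  unfold hd
  rw [← add_div]
  gcongr
  have hsub : ({i | σ i ≠ υ i} : Finset (Fin N)) ⊆
      ({i | σ i ≠ τ i} : Finset (Fin N)) ∪ ({i | τ i ≠ υ i} : Finset (Fin N)) := by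
    intro i
    simp only [Finset.mem_filter, Finset.mem_univ, true_and, Finset.mem_union]
    intro hi
    by_contra! h
    exact hi (h.1.trans h.2)
  exact_mod_cast (Finset.card_le_card hsub).trans (Finset.card_union_le _ _)

lemma hd_eq_card_support_div (σ τ : Perm (Fin N)) : hd σ τ = #(σ⁻¹ * τ).support / N := by
  rw [hd, hd_filter_eq_support]

lemma hd_mul_natCast (σ τ : Perm (Fin N)) : hd σ τ * N = #(σ⁻¹ * τ).support := by
  rcases N.eq_zero_or_pos with rfl | hN
  · simp [Subsingleton.elim (σ⁻¹ * τ) 1]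
  · rw [hd_eq_card_support_div, div_mul_cancel₀ _ (by positivity)]

lemma hd_le_div {σ τ : Perm (Fin N)} {c : ℕ} (hc : #{i | σ i ≠ τ i} ≤ c) : hd σ τ ≤ c / N := by
  unfold hd
  gcongr

end Hamming

lemma natCast_sub_div_le_abs (M N : ℕ) : ((M - N : ℕ) : ℝ) / N ≤ |(M : ℝ) / N - 1| := by
  rcases le_total N M with h | h
  · rcases N.eq_zero_or_pos with rfl | hN
    · simp
    · rw [Nat.cast_sub h, sub_div, div_self (by positivity)]
      exact le_abs_self _
  · simp [Nat.sub_eq_zero_of_le h]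

lemma natCast_sub_div_le_abs' (M N : ℕ) : ((M - N : ℕ) : ℝ) / M ≤ |(M : ℝ) / N - 1| := by
  rcases N.eq_zero_or_pos with rfl | hN
  · simpa using div_self_le_one (M : ℝ)
  rcases le_total N M with h | h
  · exact (div_le_div_of_nonneg_left (by positivity) (by positivity) (by exact_mod_cast h)).trans
      (natCast_sub_div_le_abs M N)
  · simp [Nat.sub_eq_zero_of_le h]

lemma card_filter_le_val_le {α : Type*} [Fintype α] {n : ℕ} {e : α → Fin n}
    (he : Function.Injective e) (m : ℕ) : #{x | m ≤ (e x : ℕ)} ≤ n - m := by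
  rw [← Nat.card_Ico m n]
  refine Finset.card_le_card_of_injOn (fun x => (e x : ℕ)) (fun x hx => ?_)
    fun x _ y _ hxy => he (Fin.ext hxy)
  simp only [Finset.coe_filter, Finset.mem_univ, true_and, Set.mem_ofPred_eq] at hx
  exact Finset.mem_coe.2 (Finset.mem_Ico.2 ⟨hx, (e x).2⟩)

lemma hd_le_of_eq_of_lt {N n m : ℕ} {σ τ : Perm (Fin N)} {e₁ e₂ : Fin N → Fin n}
    (he₁ : Function.Injective e₁) (he₂ : Function.Injective e₂)
    (h : ∀ i, (e₁ i : ℕ) < m → (e₂ i : ℕ) < m → σ i = τ i) :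
    hd σ τ ≤ 2 * ((n - m : ℕ) : ℝ) / N := by
  have hsub : ({i | σ i ≠ τ i} : Finset (Fin N)) ⊆
      ({i | m ≤ (e₁ i : ℕ)} : Finset (Fin N)) ∪ ({i | m ≤ (e₂ i : ℕ)} : Finset (Fin N)) := by
    intro i
    simp only [Finset.mem_filter, Finset.mem_univ, true_and, Finset.mem_union]
    contrapose!
    exact fun hi => h i hi.1 hi.2
  have hcard := ((Finset.card_le_card hsub).trans (Finset.card_union_le _ _)).trans
    (add_le_add (card_filter_le_val_le he₁ m) (card_filter_le_val_le he₂ m))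
  calc hd σ τ ≤ ((n - m + (n - m) : ℕ) : ℝ) / N := hd_le_div hcard
    _ = 2 * ((n - m : ℕ) : ℝ) / N := by push_cast; ring

section CutLiftEstimates

variable {m n : ℕ}

lemma castLE_cutPerm_apply (σ : Perm (Fin n)) (h : m ≤ n) (i : Fin m)
    (hi : (σ (Fin.castLE h i) : ℕ) < m) : Fin.castLE h (cutPerm σ h i) = σ (Fin.castLE h i) := by
  have hfind : Nat.find (cut_exists σ h i) = 1 := by
    rw [Nat.find_eq_iff]
    exact ⟨⟨le_rfl, by simpa using hi⟩, fun j hj => by interval_cases j; simp⟩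
  ext
  simp [cutPerm, cutFun, hfind]

lemma cutPerm_apply_of_apply_eq (σ : Perm (Fin n)) (h : m ≤ n) {i : Fin m}
    (hi : σ (Fin.castLE h i) = Fin.castLE h i) : cutPerm σ h i = i :=
  Fin.castLE_injective h <| by
    rw [castLE_cutPerm_apply σ h i (by simp [hi]), hi]

lemma liftPerm_apply_castLE (τ : Perm (Fin m)) (h : m ≤ n) (i : Fin m) :
    liftPerm τ h (Fin.castLE h i) = Fin.castLE h (τ i) :=
  τ.viaFintypeEmbedding_apply_image (Fin.castLEEmb h) i

lemma liftPerm_apply_of_le (τ : Perm (Fin m)) (h : m ≤ n) {j : Fin n} (hj : m ≤ (j : ℕ)) :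
    liftPerm τ h j = j := by
  refine Perm.viaFintypeEmbedding_apply_notMem_range (e := τ) (f := Fin.castLEEmb h) ?_
  rintro ⟨i, rfl⟩
  exact absurd hj (by simp)

lemma liftPerm_apply (τ : Perm (Fin m)) (h : m ≤ n) (j : Fin n) :
    liftPerm τ h j = if hj : (j : ℕ) < m then Fin.castLE h (τ ⟨j, hj⟩) else j := by
  split_ifs with hj
  · exact liftPerm_apply_castLE τ h ⟨j, hj⟩
  · exact liftPerm_apply_of_le τ h (not_lt.1 hj)

lemma liftPerm_mul (σ τ : Perm (Fin m)) (h : m ≤ n) :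
    liftPerm (σ * τ) h = liftPerm σ h * liftPerm τ h := by
  ext j
  by_cases hj : (j : ℕ) < m <;> simp [liftPerm_apply, hj]

lemma liftPerm_self (τ : Perm (Fin m)) (h : m ≤ m) : liftPerm τ h = τ := by
  ext j
  simp [liftPerm_apply]

lemma cutPerm_liftPerm (σ : Perm (Fin m)) (h : m ≤ n) : cutPerm (liftPerm σ h) h = σ := by
  ext i
  have := castLE_cutPerm_apply (liftPerm σ h) h i (by simp [liftPerm_apply_castLE])
  rw [liftPerm_apply_castLE] at this
  exact congrArg Fin.val (Fin.castLE_injective h this)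

lemma card_support_liftPerm_le (τ : Perm (Fin m)) (h : m ≤ n) :
    #(liftPerm τ h).support ≤ #τ.support := by
  refine (Finset.card_le_card fun j hj => ?_).trans (Finset.card_map (Fin.castLEEmb h)).le
  rw [Perm.mem_support] at hj
  by_cases hjm : (j : ℕ) < m
  · refine Finset.mem_map.2 ⟨⟨j, hjm⟩, Perm.mem_support.2 fun hfix => hj ?_, rfl⟩
    simp [liftPerm_apply, hjm, hfix]
  · exact absurd (liftPerm_apply_of_le τ h (not_lt.1 hjm)) hj

lemma card_support_cutPerm_le (σ : Perm (Fin n)) (h : m ≤ n) :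
    #(cutPerm σ h).support ≤ #σ.support :=
  Finset.card_le_card_of_injOn (Fin.castLE h)
    (fun _ hi => Perm.mem_support.2 fun hfix =>
      Perm.mem_support.1 hi (cutPerm_apply_of_apply_eq σ h hfix))
    fun _ _ _ _ hxy => Fin.castLE_injective h hxy

lemma hd_cutPerm_mul_le (σ τ : Perm (Fin n)) (h : m ≤ n) :
    hd (cutPerm (σ * τ) h) (cutPerm σ h * cutPerm τ h) ≤ 2 * ((n - m : ℕ) : ℝ) / m := by
  refine hd_le_of_eq_of_lt (e₁ := fun i => τ (Fin.castLE h i))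
    (e₂ := fun i => σ (τ (Fin.castLE h i)))
    (τ.injective.comp (Fin.castLE_injective h))
    (σ.injective.comp (τ.injective.comp (Fin.castLE_injective h))) fun i h₁ h₂ => ?_
  have hτ := castLE_cutPerm_apply τ h i h₁
  have hσ := castLE_cutPerm_apply σ h (cutPerm τ h i) (by rwa [hτ])
  apply Fin.castLE_injective h
  rw [Perm.mul_apply, hσ, hτ, castLE_cutPerm_apply (σ * τ) h i h₂, Perm.mul_apply]

lemma hd_liftPerm_cutPerm_le (σ : Perm (Fin n)) (h : m ≤ n) :
    hd (liftPerm (cutPerm σ h) h) σ ≤ 2 * ((n - m : ℕ) : ℝ) / n := by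
  refine hd_le_of_eq_of_lt (e₁ := id) (e₂ := σ) Function.injective_id σ.injective
    fun j h₁ h₂ => ?_
  have hj : j = Fin.castLE h ⟨j, h₁⟩ := rfl
  rw [hj, liftPerm_apply_castLE, castLE_cutPerm_apply σ h _ (by rwa [← hj])]

end CutLiftEstimates

section Updown

variable {M : ℕ}

lemma card_support_updown_le (σ : Perm (Fin M)) (N : ℕ) :
    #(updown σ N).support ≤ #σ.support := by
  unfold updown
  split
  · exact card_support_liftPerm_le σ _
  · exact card_support_cutPerm_le σ _

lemma hd_updown_mul_le (σ τ : Perm (Fin M)) (N : ℕ) :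
    hd (updown (σ * τ) N) (updown σ N * updown τ N) ≤ 2 * |(M : ℝ) / N - 1| := by
  unfold updown
  split_ifs with h
  · rw [liftPerm_mul, hd_self]
    positivity
  · refine (hd_cutPerm_mul_le σ τ _).trans ?_
    rw [mul_div_assoc]
    gcongr
    exact natCast_sub_div_le_abs M N

lemma hd_updown_updown_le (σ : Perm (Fin M)) (N : ℕ) :
    hd (updown (updown σ N) M) σ ≤ 2 * |(M : ℝ) / N - 1| := by
  by_cases h₁ : M ≤ N
  · by_cases h₂ : N ≤ M
    · obtain rfl := le_antisymm h₁ h₂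
      simp only [updown, dif_pos le_rfl, liftPerm_self, hd_self]
      positivity
    · simp only [updown, dif_pos h₁, dif_neg h₂, cutPerm_liftPerm, hd_self]
      positivity
  · have h₂ : N ≤ M := le_of_not_ge h₁
    simp only [updown, dif_neg h₁, dif_pos h₂]
    refine (hd_liftPerm_cutPerm_le σ _).trans ?_
    rw [mul_div_assoc]
    gcongr
    exact natCast_sub_div_le_abs' M N

lemma hd_updown_le (σ τ : Perm (Fin M)) (N : ℕ) :
    hd (updown σ N) (updown τ N) ≤ hd σ τ * (M / N) + 2 * |(M : ℝ) / N - 1| := by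
  set z := σ⁻¹ * τ with hz
  have hτ : σ * z = τ := mul_inv_cancel_left σ τ
  have hfirst : hd (updown σ N) (updown σ N * updown z N) ≤ hd σ τ * (M / N) := by
    rw [hd_eq_card_support_div, inv_mul_cancel_left, mul_div_assoc', hd_mul_natCast]
    gcongr
    exact_mod_cast card_support_updown_le z N
  have hsecond : hd (updown σ N * updown z N) (updown τ N) ≤ 2 * |(M : ℝ) / N - 1| := by
    rw [hd_comm, ← hτ]
    exact hd_updown_mul_le σ z N
  exact (hd_triangle _ _ _).trans (add_le_add hfirst hsecond)

end Updown

lemma eventually_atTop_mem_of_finite_compl {S : Set ℕ} (hS : Sᶜ.Finite) :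
    ∀ᶠ n in atTop, n ∈ S :=
  Nat.cofinite_eq_atTop ▸ Filter.mem_cofinite.2 hS

lemma tendsto_atTop_of_eventually_leftInverse {f g : ℕ → ℕ} (h : ∀ᶠ n in atTop, g (f n) = n) :
    Tendsto f atTop atTop := by
  refine tendsto_atTop.2 fun B => ?_
  rw [← Nat.cofinite_eq_atTop, eventually_cofinite] at h ⊢
  refine (h.union ((Set.finite_Iio B).image g)).subset fun n hn => ?_
  by_cases hn' : g (f n) = n
  · exact Or.inr ⟨f n, not_le.1 hn, hn'⟩
  · exact Or.inl hn'

lemma tendsto_div_comp_of_eventually_rightInverse {x y : ℕ → ℝ} {f g : ℕ → ℕ}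
    (h : Tendsto (fun n => x (f n) / y n) atTop (𝓝 1)) (hg : Tendsto g atTop atTop)
    (hfg : ∀ᶠ m in atTop, f (g m) = m) : Tendsto (fun m => x m / y (g m)) atTop (𝓝 1) :=
  (h.comp hg).congr' (hfg.mono fun m hm => by simp [hm])

lemma AlmostPerm.exists_eventually_inverse {f : ℕ → ℕ} (hf : AlmostPerm f) :
    ∃ g : ℕ → ℕ, (∀ᶠ n in atTop, g (f n) = n) ∧ ∀ᶠ m in atTop, f (g m) = m := by
  obtain ⟨hrange, S, hS, hinj⟩ := hf
  have himage : (f '' S)ᶜ.Finite := by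
    refine (hrange.union (hS.image f)).subset fun m hm => ?_
    by_cases hr : m ∈ Set.range f
    · obtain ⟨n, rfl⟩ := hr
      exact Or.inr ⟨n, fun hn => hm ⟨n, hn, rfl⟩, rfl⟩
    · exact Or.inl hr
  exact ⟨Function.invFunOn f S,
    (eventually_atTop_mem_of_finite_compl hS).mono fun n hn => hinj.leftInvOn_invFunOn hn,
    (eventually_atTop_mem_of_finite_compl himage).mono fun m hm => Function.invFunOn_eq hm⟩

section ReducedProduct

variable {k l : ℕ → ℕ}

lemma mkRP_eq_mkRP_iff {a b : ∀ n, Perm (Fin (k n))} :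
    mkRP a = mkRP b ↔ Tendsto (fun n => hd (a n) (b n)) atTop (𝓝 0) := by
  have hdist : ∀ n, hd ((a⁻¹ * b) n) 1 = hd (a n) (b n) := fun n => by
    rw [hd_one, hd_eq_card_support_div]
    rfl
  rw [mkRP, mkRP, QuotientGroup.eq]
  exact Iff.of_eq (congrArg (Tendsto · atTop (𝓝 0)) (funext hdist))

lemma mkRP_eq_of_eventuallyEq {a b : ∀ n, Perm (Fin (k n))} (h : ∀ᶠ n in atTop, a n = b n) :
    mkRP a = mkRP b :=
  mkRP_eq_mkRP_iff.2 <| tendsto_const_nhds.congr' <| h.mono fun n hn => by simp [hn, hd_self]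

lemma mkRP_mul (a b : ∀ n, Perm (Fin (k n))) : mkRP (a * b) = mkRP a * mkRP b := rfl

noncomputable def pushSeq (l f : ℕ → ℕ) (a : ∀ n, Perm (Fin (k n))) : ∀ n, Perm (Fin (l n)) :=
  fun n => updown (a (f n)) (l n)

variable {f : ℕ → ℕ}

lemma mkRP_pushSeq_congr (hf : Tendsto f atTop atTop)
    (hratio : Tendsto (fun n => (k (f n) : ℝ) / l n) atTop (𝓝 1))
    {a b : ∀ n, Perm (Fin (k n))} (hab : mkRP a = mkRP b) :
    mkRP (pushSeq l f a) = mkRP (pushSeq l f b) := by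
  rw [mkRP_eq_mkRP_iff] at hab ⊢
  have hbound := ((hab.comp hf).mul hratio).add ((hratio.sub_const 1).abs.const_mul 2)
  simp only [zero_mul, sub_self, abs_zero, mul_zero, add_zero] at hbound
  exact squeeze_zero (fun n => hd_nonneg _ _) (fun n => hd_updown_le _ _ _) hbound

lemma mkRP_pushSeq_mul (hratio : Tendsto (fun n => (k (f n) : ℝ) / l n) atTop (𝓝 1))
    (a b : ∀ n, Perm (Fin (k n))) :
    mkRP (pushSeq l f (a * b)) = mkRP (pushSeq l f a) * mkRP (pushSeq l f b) := by
  rw [← mkRP_mul, mkRP_eq_mkRP_iff]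
  have hbound := (hratio.sub_const 1).abs.const_mul 2
  simp only [sub_self, abs_zero, mul_zero] at hbound
  exact squeeze_zero (fun n => hd_nonneg _ _) (fun n => hd_updown_mul_le _ _ _) hbound

/-- The paper's `ψ_f`, built from the representative with `S = ℕ`. -/
noncomputable def pushHom (hf : Tendsto f atTop atTop)
    (hratio : Tendsto (fun n => (k (f n) : ℝ) / l n) atTop (𝓝 1)) : SymRP k →* SymRP l :=
  let P : (∀ n, Perm (Fin (k n))) →* SymRP l :=
    .mk' (fun a => mkRP (pushSeq l f a)) (mkRP_pushSeq_mul hratio)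
  QuotientGroup.lift _ P fun a ha =>
    (mkRP_pushSeq_congr hf hratio (b := 1) ((QuotientGroup.eq_one_iff a).2 ha)).trans P.map_one

lemma pushHom_mkRP (hf : Tendsto f atTop atTop)
    (hratio : Tendsto (fun n => (k (f n) : ℝ) / l n) atTop (𝓝 1)) (a : ∀ n, Perm (Fin (k n))) :
    pushHom hf hratio (mkRP a) = mkRP (pushSeq l f a) :=
  rfl

lemma pushHom_comp_pushHom {g : ℕ → ℕ} (hf : Tendsto f atTop atTop)
    (hratio : Tendsto (fun n => (k (f n) : ℝ) / l n) atTop (𝓝 1)) (hg : Tendsto g atTop atTop)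
    (hratio' : Tendsto (fun m => (l (g m) : ℝ) / k m) atTop (𝓝 1))
    (hfg : ∀ᶠ m in atTop, f (g m) = m) :
    (pushHom hg hratio').comp (pushHom hf hratio) = MonoidHom.id (SymRP k) := by
  refine QuotientGroup.monoidHom_ext _ (MonoidHom.ext fun a => ?_)
  change pushHom hg hratio' (pushHom hf hratio (mkRP a)) = mkRP a
  rw [pushHom_mkRP, pushHom_mkRP, mkRP_eq_mkRP_iff]
  have hratio_g : Tendsto (fun m => (k m : ℝ) / l (g m)) atTop (𝓝 1) :=
    tendsto_div_comp_of_eventually_rightInverse (x := (k ·)) (y := (l ·)) hratio hg hfg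
  have hbound := (hratio_g.sub_const 1).abs.const_mul 2
  simp only [sub_self, abs_zero, mul_zero] at hbound
  refine squeeze_zero' (.of_forall fun m => hd_nonneg _ _) (hfg.mono fun m hm => ?_) hbound
  change hd (updown (updown (a (f (g m))) (l (g m))) (k m)) (a m) ≤ _
  rw [congrArg (fun j => updown (updown (a j) (l (g m))) (k m)) hm]
  exact hd_updown_updown_le (a m) (l (g m))

end ReducedProduct

open Classical in
theorem almostPerm_induces_iso_general (k l : ℕ → ℕ)
    (f : ℕ → ℕ) (hf : AlmostPerm f)
    (hratio : Tendsto (fun n => (k (f n) : ℝ) / (l n)) atTop (nhds 1)) :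
    ∃ ψ : SymRP k ≃* SymRP l,
      ∀ a : ∀ n, Equiv.Perm (Fin (k n)),
        ∀ S : Set ℕ, Sᶜ.Finite → Set.InjOn f S →
          ψ (mkRP a) = mkRP (fun n => if n ∈ S then updown (a (f n)) (l n) else 1) := by
  obtain ⟨g, hgf, hfg⟩ := hf.exists_eventually_inverse
  have hf_top := tendsto_atTop_of_eventually_leftInverse hgf
  have hg_top := tendsto_atTop_of_eventually_leftInverse hfg
  have hratio_g : Tendsto (fun m => (k m : ℝ) / l (g m)) atTop (𝓝 1) :=
    tendsto_div_comp_of_eventually_rightInverse (x := (k ·)) (y := (l ·)) hratio hg_top hfg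
  have hratio' : Tendsto (fun m => (l (g m) : ℝ) / k m) atTop (𝓝 1) := by
    simpa using hratio_g.inv₀ one_ne_zero
  refine ⟨(pushHom hf_top hratio).toMulEquiv (pushHom hg_top hratio')
    (pushHom_comp_pushHom hf_top hratio hg_top hratio' hfg)
    (pushHom_comp_pushHom hg_top hratio' hf_top hratio hgf), fun a S hS _ => ?_⟩
  rw [MonoidHom.toMulEquiv_apply, pushHom_mkRP]
  exact mkRP_eq_of_eventuallyEq <|
    (eventually_atTop_mem_of_finite_compl hS).mono fun n hn => (if_pos hn).symm

open Classical in
/-- an almost permutation `f` of `ℕ` with `lim kₙ/lₙ = 1` induces a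
well-defined isomorphism `ψ_f : Sym[(kₙ)ₙ] → Sym[(lₙ)ₙ]`. -/
theorem almostPerm_induces_iso (k l : ℕ → ℕ)
    (hk : Tendsto k atTop atTop) (hl : Tendsto l atTop atTop)
    (f : ℕ → ℕ) (hf : AlmostPerm f)
    (hratio : Tendsto (fun n => (k (f n) : ℝ) / (l n)) atTop (nhds 1)) :
    ∃ ψ : SymRP k ≃* SymRP l,
      ∀ a : ∀ n, Equiv.Perm (Fin (k n)),
        ∀ S : Set ℕ, Sᶜ.Finite → Set.InjOn f S →
          ψ (mkRP a) = mkRP (fun n => if n ∈ S then updown (a (f n)) (l n) else 1) :=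
  almostPerm_induces_iso_general k l f hf hratio

end SymPaper
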